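/- For every permutation π, rd(π) ≤ rd(peg(π)), where peg(π) is the clean compact peg permutation associated with π. -/

import Mathlib

/-! ## Basic definitions: permutations as lists, reversals, distances -/

/-- Decorations for peg permutations: `+`, `-`, `•`. -/
inductive Deco where
  | plus : Deco
  | minus : Deco
  | dot : Deco
deriving DecidableEq, Repr

/-- A peg permutation: a list of entries together with decorations. -/
abbrev PegPerm := List (ℕ × Deco)

def pegDefault : ℕ × Deco := (0, Deco.dot)

/-- The identity permutation `1 2 ⋯ n` as a list. -/
def idPerm (n : ℕ) : List ℕ := List.range' 1 n

/-- A list of naturals is a permutation (of `1,…,n` where `n` is its length). -/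
def IsPermList (π : List ℕ) : Prop := π.Perm (idPerm π.length)

/-- Reverse the segment of a list from (0-indexed) position `i` to `j` inclusive. -/
def segReverse {α : Type*} (l : List α) (i j : ℕ) : List α :=
  l.take i ++ ((l.drop i).take (j + 1 - i)).reverse ++ l.drop (j + 1)

/-- One reversal step on permutations (reverse a segment of length at least 2). -/
def RevStep (l l' : List ℕ) : Prop :=
  ∃ i j, i < j ∧ j < l.length ∧ l' = segReverse l i j

/-- One prefix reversal step on permutations (reverse a prefix of length at least 2). -/
def PrefRevStep (l l' : List ℕ) : Prop :=
  ∃ j, 0 < j ∧ j < l.length ∧ l' = segReverse l 0 j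

/-- Reachability in exactly `k` steps of the step relation `step`. -/
def ReachIn {α : Type*} (step : α → α → Prop) : ℕ → α → α → Prop
  | 0, x, y => x = y
  | k + 1, x, y => ∃ z, step x z ∧ ReachIn step k z y

/-- The reversal distance of a permutation from the identity. -/
noncomputable def rd (π : List ℕ) : ℕ :=
  sInf {k | ReachIn RevStep k π (idPerm π.length)}

/-- The prefix reversal distance of a permutation from the identity. -/
noncomputable def prd (π : List ℕ) : ℕ :=
  sInf {k | ReachIn PrefRevStep k π (idPerm π.length)}

/-- The ball of radius `k` in the reversal model. -/
def Brd (k : ℕ) : Set (List ℕ) := {π | IsPermList π ∧ rd π ≤ k}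

/-- The ball of radius `k` in the prefix reversal model. -/
def Bprd (k : ℕ) : Set (List ℕ) := {π | IsPermList π ∧ prd π ≤ k}

/-! ## Peg permutations: oriented reversals and distances -/

def flipDeco : Deco → Deco
  | Deco.plus => Deco.minus
  | Deco.minus => Deco.plus
  | Deco.dot => Deco.dot

/-- Oriented reversal of the segment from position `i` to `j` (0-indexed) of a peg
permutation: the segment is reversed and the decorations `+`, `-` are swapped. -/
def pegSegReverse (l : PegPerm) (i j : ℕ) : PegPerm :=
  l.take i ++ (((l.drop i).take (j + 1 - i)).map (fun p => (p.1, flipDeco p.2))).reverse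
    ++ l.drop (j + 1)

/-- One oriented reversal step on peg permutations. -/
def PegRevStep (l l' : PegPerm) : Prop :=
  ∃ i j, i ≤ j ∧ j < l.length ∧ l' = pegSegReverse l i j

/-- One oriented prefix reversal step on peg permutations. -/
def PegPrefRevStep (l l' : PegPerm) : Prop :=
  ∃ j, j < l.length ∧ l' = pegSegReverse l 0 j

/-- The underlying list of a peg permutation is a permutation. -/
def IsPegPermList (l : PegPerm) : Prop := IsPermList (l.map Prod.fst)

/-- An identity peg permutation: underlying identity, every decoration `+` or `•`. -/
def IsIdPeg (l : PegPerm) : Prop :=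
  l.map Prod.fst = idPerm l.length ∧ ∀ p ∈ l, p.2 ≠ Deco.minus

/-- The reversal distance of a peg permutation from an identity peg permutation. -/
noncomputable def pegRd (l : PegPerm) : ℕ :=
  sInf {k | ∃ m, IsIdPeg m ∧ ReachIn PegRevStep k l m}

/-- The prefix reversal distance of a peg permutation from an identity peg permutation. -/
noncomputable def pegPrd (l : PegPerm) : ℕ :=
  sInf {k | ∃ m, IsIdPeg m ∧ ReachIn PegPrefRevStep k l m}

/-- The ball of radius `k` of peg permutations in the reversal model. -/
def PegBrd (k : ℕ) : Set PegPerm := {l | IsPegPermList l ∧ pegRd l ≤ k}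

/-- The ball of radius `k` of peg permutations in the prefix reversal model. -/
def PegBprd (k : ℕ) : Set PegPerm := {l | IsPegPermList l ∧ pegPrd l ≤ k}

/-! ## Patterns -/

/-- Two lists of the same length are order-isomorphic. -/
def OrderIsoList (s t : List ℕ) : Prop :=
  s.length = t.length ∧
  ∀ i j, i < s.length → j < s.length → (s.getD i 0 < s.getD j 0 ↔ t.getD i 0 < t.getD j 0)

/-- `σ` is a (classical) pattern of `τ`. -/
def IsPattern (σ τ : List ℕ) : Prop :=
  ∃ s, s.Sublist τ ∧ OrderIsoList s σ

/-- `σ` is a peg pattern of `τ`: some subsequence of `τ` is order-isomorphic to `σ`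
and whenever an entry of the subsequence is decorated `+` (resp. `-`), the
corresponding entry of `σ` is decorated `+` (resp. `-`). -/
def IsPegPattern (σ τ : PegPerm) : Prop :=
  ∃ s : PegPerm, s.Sublist τ ∧ OrderIsoList (s.map Prod.fst) (σ.map Prod.fst) ∧
    ∀ i, i < s.length →
      ((s.getD i pegDefault).2 = Deco.plus → (σ.getD i pegDefault).2 = Deco.plus) ∧
      ((s.getD i pegDefault).2 = Deco.minus → (σ.getD i pegDefault).2 = Deco.minus)

/-! ## Strips, clean compact and compact peg permutations -/

/-- Two adjacent entries of a peg permutation lie in a common strip. -/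
def StripPair (p q : ℕ × Deco) : Prop :=
  (q.1 = p.1 + 1 ∧ p.2 ≠ Deco.minus ∧ q.2 ≠ Deco.minus) ∨
  (p.1 = q.1 + 1 ∧ p.2 ≠ Deco.plus ∧ q.2 ≠ Deco.plus)

/-- A peg permutation is clean compact when all its strips have length 1, i.e. no two
adjacent entries lie in a common strip. -/
def CleanCompact (l : PegPerm) : Prop :=
  ∀ i, i + 1 < l.length → ¬ StripPair (l.getD i pegDefault) (l.getD (i + 1) pegDefault)

/-- A peg permutation is compact when every strip has length 1 or consists
exclusively of entries decorated `•`. -/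
def CompactPeg (l : PegPerm) : Prop :=
  ∀ i, i + 1 < l.length → StripPair (l.getD i pegDefault) (l.getD (i + 1) pegDefault) →
    (l.getD i pegDefault).2 = Deco.dot ∧ (l.getD (i + 1) pegDefault).2 = Deco.dot

/-! ## The clean compact peg permutation `peg(γ)` associated with a permutation -/

/-- The decomposition of a permutation into maximal monotone strips of adjacent values. -/
def stripGroups (γ : List ℕ) : List (List ℕ) :=
  γ.splitBy (fun a b => b == a + 1 || a == b + 1)

def stripMin (s : List ℕ) : ℕ := s.foldr min (s.headD 0)

def stripDeco (s : List ℕ) : Deco :=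
  if s.length ≤ 1 then Deco.dot
  else if s.headD 0 < s.getLastD 0 then Deco.plus
  else Deco.minus

/-- Rank of `v` among `vals` (used for rescaling). -/
def rankIn (vals : List ℕ) (v : ℕ) : ℕ := (vals.filter (fun w => w ≤ v)).length

/-- The clean compact peg permutation associated with a permutation: replace each
strip by its minimum, decorated `+`/`-`/`•` according to the kind of strip, and rescale. -/
def pegOf (γ : List ℕ) : PegPerm :=
  (stripGroups γ).map (fun s => (rankIn ((stripGroups γ).map stripMin) (stripMin s), stripDeco s))

/-! ## Monotone inflations and grid classes -/

/-- A legal inflation vector for a peg permutation. -/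
def LegalVec (πε : PegPerm) (v : List ℕ) : Prop :=
  v.length = πε.length ∧
  ∀ i, i < πε.length → (πε.getD i pegDefault).2 = Deco.dot → v.getD i 0 ≤ 1

/-- The values of the `i`-th block of the monotone inflation of `πε` through `v`:
an increasing (resp. decreasing) run of `vᵢ` values, occupying the interval of values
determined by the relative order of the entries of `πε`. -/
def blockVals (πε : PegPerm) (v : List ℕ) (i : ℕ) : List ℕ :=
  let off := (((List.range πε.length).filter
      (fun j => (πε.getD j pegDefault).1 < (πε.getD i pegDefault).1)).map
      (fun j => v.getD j 0)).sum
  if (πε.getD i pegDefault).2 = Deco.minus then (List.range' (off + 1) (v.getD i 0)).reverse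
  else List.range' (off + 1) (v.getD i 0)

/-- The monotone inflation `πε[v]`. -/
def inflate (πε : PegPerm) (v : List ℕ) : List ℕ :=
  ((List.range πε.length).map (blockVals πε v)).flatten

/-- The grid class of a peg permutation: all its monotone inflations through legal
inflation vectors. -/
def GridOf (πε : PegPerm) : Set (List ℕ) :=
  {γ | ∃ v, LegalVec πε v ∧ γ = inflate πε v}

/-- Compatibility of decorations in peg monotone inflations: a `+` entry is inflated by
an identity peg permutation (decorations `+`/`•`), a `-` entry by a reverse identity peg
permutation (decorations `-`/`•`), a `•` entry stays `•`. -/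
def DecoOK : Deco → Deco → Prop
  | Deco.plus, d => d ≠ Deco.minus
  | Deco.minus, d => d ≠ Deco.plus
  | Deco.dot, d => d = Deco.dot

/-- The peg grid class of a peg permutation: all its peg monotone inflations. -/
def GridPegOf (πε : PegPerm) : Set PegPerm :=
  {γ | ∃ v, LegalVec πε v ∧ ∃ bs : List PegPerm,
    bs.length = πε.length ∧ γ = bs.flatten ∧
    ∀ i, i < πε.length →
      (bs.getD i []).map Prod.fst = blockVals πε v i ∧
      ∀ p ∈ bs.getD i [], DecoOK (πε.getD i pegDefault).2 p.2}

/-! ## The inflation `π^ε_I` and the permutation `π̃^ε_I` -/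

/-- Canonical peg inflation: every inflated entry keeps the decoration of the
original one. -/
def pegInflate (πε : PegPerm) (v : List ℕ) : PegPerm :=
  ((List.range πε.length).map
    (fun i => (blockVals πε v i).map (fun x => (x, (πε.getD i pegDefault).2)))).flatten

/-- The inflation vector associated with the multiset `I = {i, j}` (0-indexed):
entries `i` and `j` are inflated by one more element each. -/
def inflVec (n i j : ℕ) : List ℕ :=
  (List.range n).map (fun l => 1 + (if l = i then 1 else 0) + (if l = j then 1 else 0))

/-- `π^ε_I` where `I = {i, j}` with `i ≤ j` 0-indexed. -/
def pegI (πε : PegPerm) (i j : ℕ) : PegPerm := pegInflate πε (inflVec πε.length i j)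

/-- `π̃^ε_I`: the result of applying to `π^ε_I` the oriented reversal of the segment
of (0-indexed) positions `i+1, …, j+1`. -/
def pegITilde (πε : PegPerm) (i j : ℕ) : PegPerm := pegSegReverse (pegI πε i j) (i + 1) (j + 1)

/-! ## Clean compact peg bases -/

/-- The clean compact peg basis of a set `B` of peg permutations: the clean compact
peg permutations not in `B` all of whose proper clean compact peg patterns are in `B`. -/
def CCPegBasis (B : Set PegPerm) : Set PegPerm :=
  {πε | IsPegPermList πε ∧ CleanCompact πε ∧ πε ∉ B ∧
    ∀ γ, IsPegPermList γ → CleanCompact γ → IsPegPattern γ πε → γ ≠ πε → γ ∈ B}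

/-! ## The exceptional peg permutations for the prefix reversal model -/

/-- `Θ_e(n)` for even `n`:  `n• (n−2)• ⋯ 4• 2• 1⁺ 3• ⋯ (n−3)• (n−1)•`. -/
def ThetaE (n : ℕ) : PegPerm :=
  ((List.range (n / 2)).map (fun i => (n - 2 * i, Deco.dot))) ++ [(1, Deco.plus)] ++
  ((List.range (n / 2 - 1)).map (fun i => (3 + 2 * i, Deco.dot)))

/-- `Θ_o(n)` for odd `n`:  `n• (n−2)• ⋯ 3• 1⁻ 2• 4• ⋯ (n−3)• (n−1)•`. -/
def ThetaO (n : ℕ) : PegPerm :=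
  ((List.range ((n - 1) / 2)).map (fun i => (n - 2 * i, Deco.dot))) ++ [(1, Deco.minus)] ++
  ((List.range ((n - 1) / 2)).map (fun i => (2 + 2 * i, Deco.dot)))

/-- `Λ_e(n)` for even `n` and `t = n/2`:  `(t+1)⁺ t• (t+2)• (t−1)• ⋯ (n−1)• 2• n• 1•`. -/
def LambdaE (n : ℕ) : PegPerm :=
  (List.range (n / 2)).flatMap
    (fun i => [(n / 2 + 1 + i, if i = 0 then Deco.plus else Deco.dot), (n / 2 - i, Deco.dot)])

/-- `Λ_o(n)` for odd `n` and `t = (n+1)/2`:  `t⁻ (t+1)• (t−1)• (t+2)• ⋯ (n−1)• 2• n• 1•`. -/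
def LambdaO (n : ℕ) : PegPerm :=
  ((n + 1) / 2, Deco.minus) ::
    (List.range ((n + 1) / 2 - 1)).flatMap
      (fun i => [((n + 1) / 2 + 1 + i, Deco.dot), ((n + 1) / 2 - 1 - i, Deco.dot)])

/-!
Every strip of `π` is an interval of values, read upwards or downwards, and `peg(π)` keeps only
its rank and its direction. Expand each entry of a peg permutation back into its interval, in
the direction given by its decoration; a `•` entry stands for a single value, so flipping its
decoration changes nothing. Then an oriented reversal of the peg permutation becomes a reversal
of the expansion, or nothing at all when the reversed entries expand to at most one value. An
optimal sorting of `peg(π)` therefore expands into a sorting of `π` using no more reversals.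
Such an optimal sorting exists because every peg permutation can be sorted: move the largest
entry to the end, fix its decoration, and recurse.
-/

namespace ReachIn

variable {α β : Type*} {step : α → α → Prop} {step' : β → β → Prop}

theorem trans {k₁ k₂ : ℕ} {x y z : α} (h₁ : ReachIn step k₁ x y) (h₂ : ReachIn step k₂ y z) :
    ReachIn step (k₁ + k₂) x z := by
  induction k₁ generalizing x with
  | zero =>
    obtain rfl : x = y := h₁
    simpa using h₂
  | succ k ih =>
    obtain ⟨w, hxw, hwy⟩ := h₁
    rw [Nat.succ_add]
    exact ⟨w, hxw, ih hwy⟩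

theorem map (F : α → β) (hF : ∀ x y, step x y → step' (F x) (F y)) {k : ℕ} {x y : α}
    (h : ReachIn step k x y) : ReachIn step' k (F x) (F y) := by
  induction k generalizing x with
  | zero =>
    obtain rfl : x = y := h
    rfl
  | succ k ih =>
    obtain ⟨z, hxz, hzy⟩ := h
    exact ⟨F z, hF x z hxz, ih hzy⟩

theorem exists_le_of_simulation (F : α → β) (I : α → Prop)
    (hF : ∀ x y, I x → step x y → I y ∧ (F y = F x ∨ step' (F x) (F y)))
    {k : ℕ} {x y : α} (hx : I x) (h : ReachIn step k x y) :
    I y ∧ ∃ k' ≤ k, ReachIn step' k' (F x) (F y) := by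
  induction k generalizing x with
  | zero =>
    obtain rfl : x = y := h
    exact ⟨hx, 0, le_rfl, rfl⟩
  | succ k ih =>
    obtain ⟨z, hxz, hzy⟩ := h
    obtain ⟨hz, hxz'⟩ := hF x z hx hxz
    obtain ⟨hy, k', hk', hzy'⟩ := ih hz hzy
    refine ⟨hy, ?_⟩
    rcases hxz' with heq | hstep
    · exact ⟨k', by omega, heq ▸ hzy'⟩
    · exact ⟨k' + 1, by omega, F z, hstep, hzy'⟩

end ReachIn

theorem eq_or_revStep_append_reverse_append (A B C : List ℕ) :
    A ++ B.reverse ++ C = A ++ B ++ C ∨ RevStep (A ++ B ++ C) (A ++ B.reverse ++ C) := by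
  match B with
  | [] | [_] => exact Or.inl rfl
  | b₁ :: b₂ :: B =>
    refine Or.inr ⟨A.length, A.length + (B.length + 1), by omega, by simp, ?_⟩
    simp [segReverse, List.drop_append, show A.length ≤ A.length + (B.length + 1) + 1 by omega,
      show A.length + (B.length + 1) + 1 - A.length = B.length + 2 by omega]

theorem take_append_take_drop_append_drop {α : Type*} (l : List α) {i j : ℕ} (hij : i ≤ j + 1) :
    l.take i ++ (l.drop i).take (j + 1 - i) ++ l.drop (j + 1) = l := by
  rw [← List.take_add, Nat.add_sub_cancel' hij, List.take_append_drop]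

def flipEntry (p : ℕ × Deco) : ℕ × Deco := (p.1, flipDeco p.2)

@[simp]
theorem flipEntry_flipEntry (p : ℕ × Deco) : flipEntry (flipEntry p) = p := by
  obtain ⟨a, d⟩ := p
  cases d <;> rfl

theorem pegSegReverse_eq (l : PegPerm) (i j : ℕ) :
    pegSegReverse l i j =
      l.take i ++ (((l.drop i).take (j + 1 - i)).map flipEntry).reverse ++ l.drop (j + 1) :=
  rfl

theorem mem_pegSegReverse {l : PegPerm} {i j : ℕ} {p : ℕ × Deco} (hp : p ∈ pegSegReverse l i j) :
    p ∈ l ∨ flipEntry p ∈ l := by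
  simp only [pegSegReverse_eq, List.mem_append, List.mem_reverse, List.mem_map] at hp
  rcases hp with (hp | ⟨q, hq, rfl⟩) | hp
  · exact Or.inl (List.mem_of_mem_take hp)
  · exact Or.inr (by simpa using List.mem_of_mem_drop (List.mem_of_mem_take hq))
  · exact Or.inl (List.mem_of_mem_drop hp)

theorem PegRevStep.map_fst_perm {l l' : PegPerm} (h : PegRevStep l l') :
    (l'.map Prod.fst).Perm (l.map Prod.fst) := by
  obtain ⟨i, j, hij, -, rfl⟩ := h
  conv_rhs => rw [← take_append_take_drop_append_drop l (by omega : i ≤ j + 1)]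
  simp only [pegSegReverse_eq, List.map_append, List.map_reverse, List.map_map]
  exact ((List.reverse_perm _).append_left _).append_right _

theorem PegRevStep.length_eq {l l' : PegPerm} (h : PegRevStep l l') : l'.length = l.length := by
  simpa using h.map_fst_perm.length_eq

def FlipCompatible (f : ℕ × Deco → List ℕ) (l : PegPerm) : Prop :=
  ∀ p ∈ l, f (flipEntry p) = (f p).reverse

theorem FlipCompatible.flatMap_reverse_map_flipEntry {f : ℕ × Deco → List ℕ} {l : PegPerm}
    (hf : FlipCompatible f l) : (l.map flipEntry).reverse.flatMap f = (l.flatMap f).reverse := by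
  induction l with
  | nil => rfl
  | cons p l ih =>
    simp [ih fun q hq => hf q (List.mem_cons_of_mem p hq), hf p List.mem_cons_self]

theorem PegRevStep.flatMap {f : ℕ × Deco → List ℕ} {l l' : PegPerm} (hf : FlipCompatible f l)
    (h : PegRevStep l l') : FlipCompatible f l' ∧
      (l'.flatMap f = l.flatMap f ∨ RevStep (l.flatMap f) (l'.flatMap f)) := by
  obtain ⟨i, j, hij, -, rfl⟩ := h
  refine ⟨fun p hp => ?_, ?_⟩
  · rcases mem_pegSegReverse hp with hp | hp
    · exact hf p hp
    · simpa using congrArg List.reverse (hf _ hp).symm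
  · have hM : FlipCompatible f ((l.drop i).take (j + 1 - i)) :=
      fun p hp => hf p (List.mem_of_mem_drop (List.mem_of_mem_take hp))
    have hl : l.flatMap f = (l.take i).flatMap f ++ ((l.drop i).take (j + 1 - i)).flatMap f ++
        (l.drop (j + 1)).flatMap f := by
      conv_lhs => rw [← take_append_take_drop_append_drop l (by omega : i ≤ j + 1)]
      simp only [List.flatMap_append]
    rw [hl]
    simp only [pegSegReverse_eq, List.flatMap_append, hM.flatMap_reverse_map_flipEntry]
    exact eq_or_revStep_append_reverse_append _ _ _

theorem ReachIn.exists_le_revStep_flatMap {f : ℕ × Deco → List ℕ} {k : ℕ} {l m : PegPerm}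
    (hf : FlipCompatible f l) (h : ReachIn PegRevStep k l m) :
    m.length = l.length ∧ ∃ k' ≤ k, ReachIn RevStep k' (l.flatMap f) (m.flatMap f) := by
  obtain ⟨⟨-, hm⟩, hk⟩ := ReachIn.exists_le_of_simulation (fun l' => l'.flatMap f)
    (fun l' => FlipCompatible f l' ∧ l'.length = l.length)
    (fun _ _ ⟨hx, hxl⟩ hxy => ⟨⟨(hxy.flatMap hx).1, hxy.length_eq.trans hxl⟩, (hxy.flatMap hx).2⟩)
    ⟨hf, rfl⟩ h
  exact ⟨hm, hk⟩

theorem PegRevStep.append_right {A B : PegPerm} (t : PegPerm) (h : PegRevStep A B) :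
    PegRevStep (A ++ t) (B ++ t) := by
  obtain ⟨i, j, hij, hj, rfl⟩ := h
  refine ⟨i, j, hij, by simp; omega, ?_⟩
  simp [pegSegReverse_eq, List.take_append_of_le_length, List.drop_append_of_le_length,
    show i ≤ A.length by omega, show j + 1 ≤ A.length by omega,
    show j + 1 - i ≤ A.length - i by omega]

theorem pegRevStep_append_flipEntry (A : PegPerm) (p : ℕ × Deco) :
    PegRevStep (A ++ [p]) (A ++ [flipEntry p]) :=
  ⟨A.length, A.length, le_rfl, by simp, by simp [pegSegReverse_eq]⟩

theorem exists_reachIn_append_ne_minus (A : PegPerm) (p : ℕ × Deco) :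
    ∃ k d, d ≠ Deco.minus ∧ ReachIn PegRevStep k (A ++ [p]) (A ++ [(p.1, d)]) := by
  by_cases hp : p.2 = Deco.minus
  · exact ⟨1, Deco.plus, nofun, _, pegRevStep_append_flipEntry A p,
      by simp [flipEntry, flipDeco, hp]; rfl⟩
  · exact ⟨0, p.2, hp, rfl⟩

theorem pegSegReverse_length_sub_one (l : PegPerm) {i : ℕ} (hi : i < l.length) :
    pegSegReverse l i (l.length - 1) =
      l.take i ++ ((l.drop (i + 1)).map flipEntry).reverse ++ [flipEntry l[i]] := by
  have hsuffix : (l.drop i).take (l.length - 1 + 1 - i) = l.drop i :=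
    List.take_of_length_le (by simp; omega)
  rw [pegSegReverse_eq, hsuffix, show l.length - 1 + 1 = l.length by omega, List.drop_length,
    List.drop_eq_getElem_cons hi]
  simp only [List.map_cons, List.reverse_cons, List.append_nil, List.append_assoc]

theorem idPerm_succ (n : ℕ) : idPerm (n + 1) = idPerm n ++ [n + 1] := by
  simp [idPerm, List.range'_concat, add_comm]

theorem IsIdPeg.append_singleton {m : PegPerm} (hm : IsIdPeg m) {d : Deco} (hd : d ≠ Deco.minus) :
    IsIdPeg (m ++ [(m.length + 1, d)]) := by
  refine ⟨?_, ?_⟩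
  · simp [hm.1, idPerm_succ]
  · intro p hp
    rcases List.mem_append.1 hp with hp | hp
    · exact hm.2 p hp
    · simpa [List.mem_singleton.1 hp] using hd

theorem exists_reachIn_isIdPeg (l : PegPerm) (hl : IsPegPermList l) :
    ∃ k m, IsIdPeg m ∧ m.length = l.length ∧ ReachIn PegRevStep k l m := by
  induction hn : l.length generalizing l with
  | zero =>
    rw [List.length_eq_zero_iff] at hn
    exact ⟨0, [], ⟨rfl, nofun⟩, rfl, hn⟩
  | succ n ih =>
    have hmax : n + 1 ∈ l.map Prod.fst := hl.symm.subset (by simp [idPerm, hn])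
    obtain ⟨pos, hpos, hpe⟩ := List.mem_iff_getElem.1 hmax
    simp only [List.length_map, List.getElem_map] at hpos hpe
    set A := l.take pos ++ ((l.drop (pos + 1)).map flipEntry).reverse
    have hstep : PegRevStep l (A ++ [flipEntry l[pos]]) :=
      ⟨pos, n, by omega, by omega, by rw [← pegSegReverse_length_sub_one l hpos, hn]; rfl⟩
    have hAn : A.length = n := by simpa [hn] using hstep.length_eq
    have hA : IsPegPermList A := by
      have := hstep.map_fst_perm.trans hl
      simp only [List.map_append, List.map_singleton, List.length_map, hn, idPerm_succ,
        flipEntry, hpe] at this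
      simpa [IsPegPermList, IsPermList, hAn] using (List.perm_append_right_iff _).1 this
    obtain ⟨k₀, d, hd, h₀⟩ := exists_reachIn_append_ne_minus A (flipEntry l[pos])
    obtain ⟨k₁, m, hm, hmA, h₁⟩ := ih A hA hAn
    refine ⟨k₀ + 1 + k₁, m ++ [(n + 1, d)], ?_, by simp [hmA], ?_⟩
    · simpa [hmA, hAn] using hm.append_singleton hd
    · refine ReachIn.trans (x := l) ⟨_, hstep, ?_⟩
        (h₁.map (· ++ [(n + 1, d)]) fun _ _ h => h.append_right _)
      simpa [flipEntry, hpe] using h₀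

theorem le_foldr_min_iff {α : Type*} [LinearOrder α] {a d : α} {t : List α} :
    a ≤ t.foldr min d ↔ a ≤ d ∧ ∀ x ∈ t, a ≤ x := by
  induction t with
  | nil => simp
  | cons x t ih => simp [ih, and_left_comm]

theorem stripMin_eq {s : List ℕ} {a : ℕ} (ha : a ∈ s) (hle : ∀ x ∈ s, a ≤ x) : stripMin s = a := by
  obtain ⟨b, t, rfl⟩ := List.exists_cons_of_ne_nil (List.ne_nil_of_mem ha)
  refine le_antisymm ((le_foldr_min_iff.1 (le_refl (stripMin (b :: t)))).2 a ha) ?_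
  exact le_foldr_min_iff.2 ⟨hle b List.mem_cons_self, hle⟩

theorem foldr_min_mem {α : Type*} [LinearOrder α] (d : α) (t : List α) :
    t.foldr min d ∈ d :: t := by
  induction t with
  | nil => simp
  | cons x t ih =>
    rw [List.foldr_cons]
    rcases min_choice x (t.foldr min d) with h | h <;> rw [h]
    · exact List.mem_cons_of_mem _ List.mem_cons_self
    · exact List.cons_subset_cons d (List.subset_cons_self x t) ih

theorem stripMin_mem {s : List ℕ} (hs : s ≠ []) : stripMin s ∈ s := by
  obtain ⟨b, t, rfl⟩ := List.exists_cons_of_ne_nil hs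
  show (b :: t).foldr min b ∈ b :: t
  rcases List.mem_cons.1 (foldr_min_mem b (b :: t)) with h | h
  · rw [h]
    exact List.mem_cons_self
  · exact h

theorem stripMin_range' (a : ℕ) {k : ℕ} (hk : 0 < k) : stripMin (List.range' a k) = a :=
  stripMin_eq (by simp [List.mem_range']; omega) (by simp [List.mem_range']; omega)

theorem stripMin_reverse_range' (a : ℕ) {k : ℕ} (hk : 0 < k) :
    stripMin (List.range' a k).reverse = a :=
  stripMin_eq (by simp [List.mem_range']; omega) (by simp [List.mem_range']; omega)

theorem stripDeco_range' (a : ℕ) {k : ℕ} (hk : 2 ≤ k) :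
    stripDeco (List.range' a k) = Deco.plus := by
  simp [stripDeco, List.getLastD_eq_getLast?, List.getLast?_range', List.headD_eq_head?_getD,
    List.head?_range', show ¬k ≤ 1 by omega, show k ≠ 0 by omega]

theorem stripDeco_reverse_range' (a : ℕ) {k : ℕ} (hk : 2 ≤ k) :
    stripDeco (List.range' a k).reverse = Deco.minus := by
  simp [stripDeco, List.getLastD_eq_getLast?, List.getLast?_range', List.headD_eq_head?_getD,
    List.head?_range', show ¬k ≤ 1 by omega, show k ≠ 0 by omega]
  omega

theorem isChain_succ_or_isChain_pred : ∀ {s : List ℕ}, s.Nodup →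
    s.IsChain (fun x y => y = x + 1 ∨ x = y + 1) →
    s.IsChain (fun x y => y = x + 1) ∨ s.IsChain (fun x y => x = y + 1)
  | [], _, _ => .inl .nil
  | [_], _, _ => .inl (.singleton _)
  | [_, _], _, h => (List.isChain_pair.1 h).imp List.isChain_pair.2 List.isChain_pair.2
  | x :: y :: z :: t, hnd, h => by
    have hxz : x ≠ z := by simp_all
    rw [List.isChain_cons_cons] at h
    have hyz := (List.isChain_cons_cons.1 h.2).1
    rcases isChain_succ_or_isChain_pred hnd.of_cons h.2 with hup | hdown
    · exact .inl (hup.cons_cons (by have := (List.isChain_cons_cons.1 hup).1; omega))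
    · exact .inr (hdown.cons_cons (by have := (List.isChain_cons_cons.1 hdown).1; omega))

theorem eq_range'_of_isChain_succ : ∀ {s : List ℕ}, s.IsChain (fun x y => y = x + 1) →
    s = List.range' (s.headD 0) s.length
  | [], _ => rfl
  | [_], _ => rfl
  | x :: y :: t, h => by
    rw [List.isChain_cons_cons] at h
    conv_lhs => rw [eq_range'_of_isChain_succ h.2, h.1]
    simp [List.range'_succ]

def orient (d : Deco) (l : List ℕ) : List ℕ := if d = Deco.minus then l.reverse else l

theorem orient_flipDeco (d : Deco) (l : List ℕ) (h : d = Deco.dot → l.length ≤ 1) :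
    orient (flipDeco d) l = (orient d l).reverse := by
  cases d with
  | plus | minus => simp [orient, flipDeco]
  | dot =>
    match l, h rfl with
    | [], _ | [_], _ => rfl

theorem orient_perm (d : Deco) (l : List ℕ) : (orient d l).Perm l := by
  unfold orient
  split_ifs
  exacts [List.reverse_perm l, List.Perm.refl l]

theorem length_le_one_of_stripDeco_eq_dot {s : List ℕ} (h : stripDeco s = Deco.dot) :
    s.length ≤ 1 := by
  unfold stripDeco at h
  split_ifs at h with hs
  exact hs

theorem eq_orient_stripDeco {s : List ℕ} (hne : s ≠ []) (hnd : s.Nodup)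
    (h : s.IsChain (fun x y => y = x + 1 ∨ x = y + 1)) :
    s = orient (stripDeco s) (List.range' (stripMin s) s.length) := by
  have hk : 0 < s.length := List.length_pos_iff.2 hne
  have of_isChain_succ (hup : s.IsChain (fun x y => y = x + 1)) :
      s = orient (stripDeco s) (List.range' (stripMin s) s.length) := by
    have hs := eq_range'_of_isChain_succ hup
    set a := s.headD 0
    have hdeco : stripDeco s ≠ Deco.minus := by
      rw [hs]
      by_cases hk2 : 2 ≤ s.length
      · simp [stripDeco_range' a hk2]
      · simp [stripDeco, show s.length ≤ 1 by omega]
    rw [orient, if_neg hdeco, hs, stripMin_range' a hk, List.length_range', ← hs]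
  rcases isChain_succ_or_isChain_pred hnd h with hup | hdown
  · exact of_isChain_succ hup
  by_cases hk2 : 2 ≤ s.length
  · have hs := eq_range'_of_isChain_succ (List.isChain_reverse.2 hdown)
    rw [List.length_reverse, List.reverse_eq_iff] at hs
    rw [orient, hs, stripDeco_reverse_range' _ hk2, if_pos rfl, stripMin_reverse_range' _ hk,
      List.length_reverse, List.length_range']
  · obtain ⟨x, rfl⟩ : ∃ x, s = [x] := List.length_eq_one_iff.1 (by omega)
    exact of_isChain_succ (.singleton x)

theorem rankIn_getElem_of_pairwise_lt : ∀ {L : List ℕ}, L.Pairwise (· < ·) →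
    ∀ i (hi : i < L.length), rankIn L L[i] = i + 1
  | [], _, _, hi => absurd hi (Nat.not_lt_zero _)
  | x :: t, hL, i, hi => by
    rw [List.pairwise_cons] at hL
    cases i with
    | zero =>
      simpa [rankIn, List.filter_eq_nil_iff] using hL.1
    | succ i =>
      have hi' : i < t.length := by simpa using hi
      have hx : x ≤ t[i] := (hL.1 _ (List.getElem_mem hi')).le
      have := rankIn_getElem_of_pairwise_lt hL.2 i hi'
      simp only [rankIn] at this
      simp [rankIn, hx, this]

theorem getD_rankIn_of_sortedLT {S : List (ℕ × ℕ)} (hS : (S.map Prod.fst).SortedLT) {q : ℕ × ℕ}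
    (hq : q ∈ S) (d : ℕ × ℕ) : S.getD (rankIn (S.map Prod.fst) q.1 - 1) d = q := by
  obtain ⟨i, hi, rfl⟩ := List.mem_iff_getElem.1 hq
  have := rankIn_getElem_of_pairwise_lt hS.pairwise i (by simpa using hi)
  simp only [List.getElem_map] at this
  simp [this, hi]

theorem map_rankIn_perm_idPerm {L : List ℕ} (hL : L.Nodup) :
    (L.map (rankIn L)).Perm (idPerm L.length) := by
  set L' := L.mergeSort (· ≤ ·)
  have hperm : L'.Perm L := List.mergeSort_perm L _
  have hL' : L'.Pairwise (· < ·) :=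
    (List.sortedLE_mergeSort.sortedLT_of_nodup (hperm.nodup_iff.2 hL)).pairwise
  have hrank : L.map (rankIn L) = L.map (rankIn L') :=
    List.map_congr_left fun v _ => (hperm.filter _).length_eq.symm
  have hsorted : L'.map (rankIn L') = idPerm L.length := by
    refine List.ext_getElem (by simp [L', idPerm]) fun i hi _ => ?_
    simp [idPerm, rankIn_getElem_of_pairwise_lt hL' i (by simpa using hi), add_comm]
  rw [hrank, ← hsorted]
  exact hperm.symm.map _

theorem flatMap_range'_eq_range'_of_perm : ∀ {L : List (ℕ × ℕ)} {a N : ℕ},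
    (L.map Prod.fst).Pairwise (· < ·) →
    (L.flatMap fun q => List.range' q.1 q.2).Perm (List.range' a N) →
    L.flatMap (fun q => List.range' q.1 q.2) = List.range' a N
  | [], _, _, _, hp => (List.perm_nil.1 hp.symm).symm
  | q :: L, a, N, hL, hp => by
    rw [List.map_cons, List.pairwise_cons] at hL
    rw [List.flatMap_cons] at hp ⊢
    by_cases hq : q.2 = 0
    · rw [hq, List.range'_zero, List.nil_append] at hp ⊢
      exact flatMap_range'_eq_range'_of_perm hL.2 hp
    have hqa : a ≤ q.1 ∧ q.2 ≤ N := by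
      have hmem := hp.subset (List.mem_append_left _ (List.mem_range'_1.2 ⟨le_rfl, by omega⟩))
      have hlen := hp.length_eq
      simp only [List.length_append, List.length_range'] at hlen
      exact ⟨(List.mem_range'_1.1 hmem).1, by omega⟩
    have haq : q.1 ≤ a := by
      have hmem := hp.symm.subset (List.mem_range'_1.2 ⟨le_rfl, by omega⟩)
      simp only [List.mem_append, List.mem_range'_1, List.mem_flatMap] at hmem
      rcases hmem with h | ⟨p, hpL, hap⟩
      · exact h.1
      · exact ((hL.1 p.1 (List.mem_map_of_mem hpL)).trans_le hap.1).le
    have hsplit : List.range' a N = List.range' a q.2 ++ List.range' (a + q.2) (N - q.2) := by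
      simp [Nat.add_sub_cancel' hqa.2]
    obtain rfl : q.1 = a := le_antisymm haq hqa.1
    rw [hsplit] at hp ⊢
    rw [flatMap_range'_eq_range'_of_perm hL.2 ((List.perm_append_left_iff _).1 hp)]

theorem IsPermList.nodup {π : List ℕ} (h : IsPermList π) : π.Nodup :=
  h.nodup_iff.2 List.nodup_range'

theorem flatten_stripGroups (π : List ℕ) : (stripGroups π).flatten = π :=
  List.flatten_splitBy _ _

theorem ne_nil_of_mem_stripGroups {π s : List ℕ} (hs : s ∈ stripGroups π) : s ≠ [] :=
  fun h => List.nil_notMem_splitBy _ _ (h ▸ hs)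

theorem eq_orient_of_mem_stripGroups {π : List ℕ} (hπ : π.Nodup) {s : List ℕ}
    (hs : s ∈ stripGroups π) : s = orient (stripDeco s) (List.range' (stripMin s) s.length) := by
  refine eq_orient_stripDeco (ne_nil_of_mem_stripGroups hs)
    ((List.sublist_flatten_of_mem hs).nodup (by rwa [flatten_stripGroups])) ?_
  exact (List.isChain_of_mem_splitBy hs).imp fun a b hab => by simpa using hab

theorem nodup_map_stripMin_stripGroups {π : List ℕ} (hπ : π.Nodup) :
    ((stripGroups π).map stripMin).Nodup := by
  have hnd : (stripGroups π).flatten.Nodup := by rwa [flatten_stripGroups]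
  rw [List.nodup_flatten] at hnd
  rw [List.Nodup, List.pairwise_map]
  exact hnd.2.imp_of_mem fun hs ht hdisj heq => hdisj (stripMin_mem (ne_nil_of_mem_stripGroups hs))
    (heq ▸ stripMin_mem (ne_nil_of_mem_stripGroups ht))

def stripIntervals (π : List ℕ) : List (ℕ × ℕ) :=
  ((stripGroups π).map fun s => (stripMin s, s.length)).mergeSort fun p q => p.1 ≤ q.1

/-- An entry of rank `r` stands for the `r`-th value interval `(start, length)` of a strip of
`π`, read in the direction of its decoration. -/
def stripExpansion (π : List ℕ) (p : ℕ × Deco) : List ℕ :=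
  let q := (stripIntervals π).getD (p.1 - 1) (0, 0)
  orient p.2 (List.range' q.1 q.2)

theorem map_fst_stripIntervals (π : List ℕ) :
    (stripIntervals π).map Prod.fst = ((stripGroups π).map stripMin).mergeSort (· ≤ ·) := by
  rw [stripIntervals, List.map_mergeSort (s := fun a b => decide (a ≤ b)) (fun _ _ _ _ => rfl),
    List.map_map]
  rfl

theorem sortedLT_map_fst_stripIntervals {π : List ℕ} (hπ : π.Nodup) :
    ((stripIntervals π).map Prod.fst).SortedLT := by
  rw [map_fst_stripIntervals]
  exact List.sortedLE_mergeSort.sortedLT_of_nodup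
    ((List.mergeSort_perm _ _).nodup_iff.2 (nodup_map_stripMin_stripGroups hπ))

theorem stripExpansion_rankIn {π : List ℕ} (hπ : π.Nodup) {s : List ℕ} (hs : s ∈ stripGroups π)
    (d : Deco) :
    stripExpansion π (rankIn ((stripGroups π).map stripMin) (stripMin s), d) =
      orient d (List.range' (stripMin s) s.length) := by
  have hrank : rankIn ((stripGroups π).map stripMin) (stripMin s) =
      rankIn ((stripIntervals π).map Prod.fst) (stripMin s) := by
    rw [map_fst_stripIntervals]
    exact ((List.mergeSort_perm _ _).filter _).length_eq.symm
  have hmem : (stripMin s, s.length) ∈ stripIntervals π :=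
    List.mem_mergeSort.2 (List.mem_map_of_mem hs)
  simp only [stripExpansion, hrank,
    getD_rankIn_of_sortedLT (sortedLT_map_fst_stripIntervals hπ) hmem]

theorem flatMap_stripExpansion_pegOf {π : List ℕ} (hπ : π.Nodup) :
    (pegOf π).flatMap (stripExpansion π) = π := by
  conv_rhs => rw [← flatten_stripGroups π, List.flatten_eq_flatMap]
  rw [pegOf, List.flatMap_map]
  exact List.flatMap_congr fun s hs => by
    rw [stripExpansion_rankIn hπ hs, ← eq_orient_of_mem_stripGroups hπ hs]
    rfl

theorem flipCompatible_stripExpansion_pegOf {π : List ℕ} (hπ : π.Nodup) :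
    FlipCompatible (stripExpansion π) (pegOf π) := by
  intro p hp
  obtain ⟨s, hs, rfl⟩ := List.mem_map.1 hp
  simp only [flipEntry, stripExpansion_rankIn hπ hs]
  exact orient_flipDeco _ _ fun h => by simpa using length_le_one_of_stripDeco_eq_dot h

theorem isPegPermList_pegOf {π : List ℕ} (hπ : π.Nodup) : IsPegPermList (pegOf π) := by
  simpa [IsPegPermList, IsPermList, pegOf, List.map_map, Function.comp_def] using
    map_rankIn_perm_idPerm (nodup_map_stripMin_stripGroups hπ)

theorem flatMap_range'_stripIntervals {π : List ℕ} (h : IsPermList π) :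
    (stripIntervals π).flatMap (fun q => List.range' q.1 q.2) = idPerm π.length := by
  have hπ := h.nodup
  refine flatMap_range'_eq_range'_of_perm (sortedLT_map_fst_stripIntervals hπ).pairwise ?_
  refine .trans ?_ h
  conv_rhs => rw [← flatten_stripGroups π, List.flatten_eq_flatMap]
  refine ((List.mergeSort_perm _ _).flatMap_right _).trans ?_
  rw [List.flatMap_map]
  exact List.Perm.flatMap_left _ fun s hs => by
    conv_rhs => rw [eq_orient_of_mem_stripGroups hπ hs]
    exact (orient_perm _ _).symm

theorem flatMap_stripExpansion_of_isIdPeg {π : List ℕ} (h : IsPermList π) {m : PegPerm}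
    (hm : IsIdPeg m) (hlen : m.length = (pegOf π).length) :
    m.flatMap (stripExpansion π) = idPerm π.length := by
  set S := stripIntervals π
  have hSlen : S.length = m.length := by simp [S, stripIntervals, hlen, pegOf]
  have hS : (idPerm S.length).map (fun r => S.getD (r - 1) (0, 0)) = S :=
    List.ext_getElem (by simp [idPerm]) fun i _ hi => by simp [idPerm, List.getElem_range', hi]
  calc m.flatMap (stripExpansion π)
      = (m.map Prod.fst).flatMap fun r => List.range' (S.getD (r - 1) (0, 0)).1
          (S.getD (r - 1) (0, 0)).2 := by
        rw [List.flatMap_map]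
        exact List.flatMap_congr fun p hp => by simp [stripExpansion, orient, hm.2 p hp, S]
    _ = S.flatMap fun q => List.range' q.1 q.2 := by
        rw [hm.1, ← hSlen]
        conv_rhs => rw [← hS]
        rw [List.flatMap_map]
    _ = idPerm π.length := flatMap_range'_stripIntervals h

/-- for every permutation `π`, `rd(π) ≤ rd(peg(π))`. -/
theorem rd_le_pegRd_pegOf (π : List ℕ) (h : IsPermList π) :
    rd π ≤ pegRd (pegOf π) := by
  have hπ := h.nodup
  obtain ⟨k, m₀, hm₀, -, hsorts⟩ := exists_reachIn_isIdPeg (pegOf π) (isPegPermList_pegOf hπ)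
  obtain ⟨m, hm, hreach⟩ : ∃ m, IsIdPeg m ∧ ReachIn PegRevStep (pegRd (pegOf π)) (pegOf π) m :=
    Nat.sInf_mem (s := {k | ∃ m, IsIdPeg m ∧ ReachIn PegRevStep k (pegOf π) m})
      ⟨k, m₀, hm₀, hsorts⟩
  obtain ⟨hlen, k', hk', hrev⟩ :=
    hreach.exists_le_revStep_flatMap (flipCompatible_stripExpansion_pegOf hπ)
  rw [flatMap_stripExpansion_pegOf hπ, flatMap_stripExpansion_of_isIdPeg h hm hlen] at hrev
  exact (Nat.sInf_le hrev).trans hk'
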